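/- arXiv:math/0604331 — 2 statements merged into one kernel-verified Lean document; each statement's English description precedes it below -/
import Mathlib

section
/- Let (η_j)_{j≥1} be independent random variables with η_j Gamma-distributed with parameter j/2, and set R_j = η_j/η_{j+1}. Then for any p > 2, almost surely Σ_{k≥1} |R_k - 1|^p < ∞. -/
open MeasureTheory ProbabilityTheory Real Set Filter

/-! By a Chernoff bound with the Gamma moment generating function `(1 - t) ^ (-a)`, a `Γ(a, 1)`
variable leaves `[(1 - δ) a, (1 + δ) a]` with probability at most `2 exp (-a δ² / 8)`.
For `η_j`, `a = j / 2`, and with `δ = j ^ (-α)`, `1 / p < α < 1 / 2`, these probabilities are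
summable, so by Borel–Cantelli almost surely `|η_j - j / 2| ≤ j ^ (-α) j / 2` for all large `j`.
Then `|R_j - 1| ≤ 6 j ^ (-α)` eventually, and `∑ j ^ (-α p)` converges because `α p > 1`. -/

lemma neg_log_one_sub_le {x : ℝ} (hx : |x| ≤ 1 / 2) : -log (1 - x) ≤ x + 2 * x ^ 2 := by
  have h := abs_log_sub_add_sum_range_le (hx.trans_lt (by norm_num)) 1
  simp only [Finset.sum_range_one, zero_add, pow_one, Nat.cast_zero, div_one] at h
  have hbound : |x| ^ 2 / (1 - |x|) ≤ 2 * x ^ 2 := by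
    rw [div_le_iff₀ (by linarith), sq_abs]
    nlinarith [sq_nonneg x]
  linarith [neg_abs_le (x + log (1 - x)), h.trans hbound]

lemma lintegral_exp_mul_gammaMeasure {a t : ℝ} (ha : 0 < a) (ht : t < 1) :
    ∫⁻ x, ENNReal.ofReal (exp (t * x)) ∂gammaMeasure a 1 = ENNReal.ofReal ((1 - t) ^ (-a)) := by
  have ht' : 0 < 1 - t := by linarith
  have htilt : ∀ x, gammaPDF a 1 x * ENNReal.ofReal (exp (t * x)) =
      ENNReal.ofReal ((1 - t) ^ (-a)) * gammaPDF a (1 - t) x := by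
    intro x
    rcases lt_or_ge x 0 with hx | hx
    · simp [gammaPDF_of_neg hx]
    rw [gammaPDF_of_nonneg hx, gammaPDF_of_nonneg hx, ← ENNReal.ofReal_mul (by positivity),
      ← ENNReal.ofReal_mul (by positivity)]
    congr 1
    rw [one_rpow, rpow_neg ht'.le, one_mul, show -((1 - t) * x) = -x + t * x by ring, exp_add]
    field_simp
  have hpdf (r : ℝ) : Measurable (gammaPDF a r) := (measurable_gammaPDFReal a r).ennreal_ofReal
  rw [gammaMeasure, lintegral_withDensity_eq_lintegral_mul _ (hpdf 1) (by fun_prop)]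
  simp only [Pi.mul_apply, htilt]
  rw [lintegral_const_mul _ (hpdf (1 - t)),
    lintegral_gammaPDF_eq_one ha ht', mul_one]

lemma measure_le_ofReal_exp_neg_mul_lintegral_exp (μ : Measure ℝ) {S : Set ℝ} {t c : ℝ}
    (hS : ∀ x ∈ S, c ≤ t * x) :
    μ S ≤ ENNReal.ofReal (exp (-c)) * ∫⁻ x, ENNReal.ofReal (exp (t * x)) ∂μ := by
  have hsub : S ⊆ {x | 1 ≤ ENNReal.ofReal (exp (-c + t * x))} := fun x hx => by
    simpa using hS x hx
  calc μ S ≤ 1 * μ {x | 1 ≤ ENNReal.ofReal (exp (-c + t * x))} := by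
        rw [one_mul]; exact measure_mono hsub
    _ ≤ ∫⁻ x, ENNReal.ofReal (exp (-c + t * x)) ∂μ :=
        mul_meas_ge_le_lintegral₀ (by fun_prop) 1
    _ = _ := by
        simp_rw [exp_add, ENNReal.ofReal_mul (exp_pos _).le]
        exact lintegral_const_mul _ (by fun_prop)

lemma gammaMeasure_le_of_le_mul {a t c : ℝ} (ha : 0 < a) (ht : t < 1) {S : Set ℝ}
    (hS : ∀ x ∈ S, c ≤ t * x) :
    gammaMeasure a 1 S ≤ ENNReal.ofReal (exp (-c - a * log (1 - t))) := by
  refine (measure_le_ofReal_exp_neg_mul_lintegral_exp _ hS).trans_eq ?_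
  rw [lintegral_exp_mul_gammaMeasure ha ht, ← ENNReal.ofReal_mul (exp_pos _).le,
    rpow_def_of_pos (by linarith), ← exp_add]
  ring_nf

lemma gammaMeasure_abs_sub_gt_le {a δ : ℝ} (ha : 0 < a) (hδ0 : 0 ≤ δ) (hδ : δ ≤ 2) :
    gammaMeasure a 1 {x | δ * a < |x - a|} ≤ ENNReal.ofReal (2 * exp (-(a * δ ^ 2 / 8))) := by
  have hlog (s : ℝ) (hs : |s| = δ / 4) :
      -(s * (1 + 4 * s) * a) - a * log (1 - s) ≤ -(a * δ ^ 2 / 8) := by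
    have := neg_log_one_sub_le (x := s) (by rw [hs]; linarith)
    have hs2 : s ^ 2 = δ ^ 2 / 16 := by rw [← sq_abs, hs]; ring
    nlinarith [mul_le_mul_of_nonneg_left this ha.le]
  have htail (s : ℝ) (hs : |s| = δ / 4) :
      gammaMeasure a 1 {x | s * (1 + 4 * s) * a ≤ s * x} ≤
        ENNReal.ofReal (exp (-(a * δ ^ 2 / 8))) :=
    (gammaMeasure_le_of_le_mul ha (by linarith [le_abs_self s]) fun _ hx => hx).trans
      (ENNReal.ofReal_le_ofReal (exp_le_exp.mpr (hlog s hs)))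
  have hsub : {x | δ * a < |x - a|} ⊆ {x | δ / 4 * (1 + 4 * (δ / 4)) * a ≤ δ / 4 * x} ∪
      {x | -(δ / 4) * (1 + 4 * -(δ / 4)) * a ≤ -(δ / 4) * x} := by
    intro x hx
    rcases lt_abs.mp (show δ * a < |x - a| from hx) with h | h
    · exact Or.inl (show _ ≤ δ / 4 * x by nlinarith)
    · exact Or.inr (show _ ≤ -(δ / 4) * x by nlinarith)
  calc gammaMeasure a 1 {x | δ * a < |x - a|}
      ≤ ENNReal.ofReal (exp (-(a * δ ^ 2 / 8))) + ENNReal.ofReal (exp (-(a * δ ^ 2 / 8))) :=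
        (measure_mono hsub).trans <| (measure_union_le _ _).trans <|
          add_le_add (htail _ (abs_of_nonneg (by positivity)))
            (htail _ (by rw [abs_neg, abs_of_nonneg (by positivity)]))
    _ = ENNReal.ofReal (2 * exp (-(a * δ ^ 2 / 8))) := by
        rw [← ENNReal.ofReal_add (exp_pos _).le (exp_pos _).le, two_mul]

lemma summable_exp_neg_mul_rpow {c β : ℝ} (hc : 0 < c) (hβ : 0 < β) :
    Summable fun n : ℕ => exp (-(c * (n : ℝ) ^ β)) := by
  have hlittleO := (isLittleO_rpow_exp_pos_mul_atTop (2 / β) hc).comp_tendsto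
    ((tendsto_rpow_atTop hβ).comp tendsto_natCast_atTop_atTop)
  refine Real.summable_nat_pow_inv.mpr one_lt_two |>.of_norm_bounded_eventually_nat ?_
  filter_upwards [hlittleO.bound one_pos, eventually_ge_atTop 1] with n hn hn1
  have hn0 : (0 : ℝ) < n := by exact_mod_cast hn1
  simp only [Function.comp_apply, norm_eq_abs, one_mul] at hn
  rw [← rpow_mul hn0.le, mul_div_cancel₀ _ hβ.ne', rpow_two, abs_of_nonneg (by positivity),
    abs_of_pos (exp_pos _)] at hn
  rw [norm_eq_abs, abs_of_pos (exp_pos _), exp_neg]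
  exact inv_anti₀ (by positivity) hn

lemma ae_eventually_abs_sub_le_of_map_eq_gammaMeasure {Ω : Type*} [MeasurableSpace Ω]
    {μ : Measure Ω} {X : ℕ → Ω → ℝ} (hX : ∀ k, AEMeasurable (X k) μ)
    (hlaw : ∀ k, μ.map (X k) = gammaMeasure (((k : ℝ) + 1) / 2) 1) {α : ℝ} (hα0 : 0 ≤ α)
    (hα : α < 1 / 2) :
    ∀ᵐ ω ∂μ, ∀ᶠ k in atTop,
      |X k ω - ((k : ℝ) + 1) / 2| ≤ ((k : ℝ) + 1) ^ (-α) * (((k : ℝ) + 1) / 2) := by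
  set a : ℕ → ℝ := fun k => ((k : ℝ) + 1) / 2
  set δ : ℕ → ℝ := fun k => ((k : ℝ) + 1) ^ (-α)
  have hδ (k : ℕ) : δ k ≤ 1 := rpow_le_one_of_one_le_of_nonpos (by simp) (by linarith)
  have hexponent (k : ℕ) : a k * δ k ^ 2 / 8 = 1 / 16 * ((k + 1 : ℕ) : ℝ) ^ (1 - 2 * α) := by
    have hk : (0 : ℝ) < k + 1 := by positivity
    simp only [a, δ, Nat.cast_add_one, ← rpow_natCast, ← rpow_mul hk.le, sub_eq_add_neg,
      rpow_add hk, rpow_one]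
    ring_nf
  have hmeasure (k : ℕ) :
      μ {ω | δ k * a k < |X k ω - a k|} ≤ ENNReal.ofReal (2 * exp (-(a k * δ k ^ 2 / 8))) := by
    have hmap := Measure.map_apply_of_aemeasurable (hX k)
      (measurableSet_lt measurable_const (by fun_prop) : MeasurableSet {x | δ k * a k < |x - a k|})
    rw [hlaw k, Set.preimage_ofPred_eq] at hmap
    rw [← hmap]
    exact gammaMeasure_abs_sub_gt_le (by positivity) (by positivity) (by linarith [hδ k])
  have hsummable : Summable fun k : ℕ => 2 * exp (-(a k * δ k ^ 2 / 8)) := by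
    simp only [hexponent]
    exact ((summable_nat_add_iff 1).mpr
      (summable_exp_neg_mul_rpow (by norm_num) (by linarith))).mul_left 2
  have hfinite : ∑' k, μ {ω | δ k * a k < |X k ω - a k|} ≠ ⊤ := by
    refine ne_top_of_le_ne_top ?_ (ENNReal.tsum_le_tsum hmeasure)
    rw [← ENNReal.ofReal_tsum_of_nonneg (fun k => by positivity) hsummable]
    exact ENNReal.ofReal_ne_top
  filter_upwards [ae_eventually_notMem hfinite] with ω hω
  filter_upwards [hω] with k hk
  simpa [mul_comm] using hk

lemma abs_div_sub_one_le {a b d x y : ℝ} (hab : a ≤ b) (hba : b ≤ a + 1) (hd0 : 0 ≤ d)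
    (hd : d ≤ 1 / 2) (had : 1 ≤ a * d) (hx : |x - a| ≤ d * a) (hy : |y - b| ≤ d * b) :
    |x / y - 1| ≤ 6 * d := by
  have ha : 0 < a := by nlinarith
  have hy : b / 2 ≤ y := by nlinarith [neg_abs_le (y - b)]
  have hy0 : 0 < y := by linarith
  rw [div_sub_one hy0.ne', abs_div, abs_of_pos hy0, div_le_iff₀ hy0]
  calc |x - y| ≤ |x - a| + (|a - b| + |b - y|) :=
        (abs_sub_le x a y).trans (add_le_add_right (abs_sub_le a b y) _)
    _ ≤ d * a + (b - a) + d * b := by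
        rw [abs_sub_comm a b, abs_sub_comm b y, abs_of_nonneg (by linarith : 0 ≤ b - a)]
        linarith
    _ ≤ 6 * d * y := by nlinarith

lemma eventually_rpow_neg_le_and_one_le {α : ℝ} (hα0 : 0 < α) (hα : α < 1) :
    ∀ᶠ k : ℕ in atTop, ((k : ℝ) + 1) ^ (-α) ≤ 1 / 2 ∧
      1 ≤ ((k : ℝ) + 1) / 2 * ((k : ℝ) + 1) ^ (-α) := by
  have hk := tendsto_atTop_add_const_right atTop (1 : ℝ) tendsto_natCast_atTop_atTop
  have hsmall := ((tendsto_rpow_neg_atTop hα0).comp hk).eventually (ge_mem_nhds one_half_pos)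
  have hlarge := ((tendsto_rpow_atTop (sub_pos.mpr hα)).comp hk).eventually_ge_atTop 2
  filter_upwards [hsmall, hlarge] with k hsmall hlarge
  refine ⟨hsmall, ?_⟩
  have hk0 : (0 : ℝ) < k + 1 := by positivity
  simp only [Function.comp_apply, sub_eq_add_neg, rpow_add hk0, rpow_one] at hlarge
  linarith

lemma eventually_abs_div_succ_sub_one_le {x : ℕ → ℝ} {α : ℝ} (hα0 : 0 < α) (hα : α < 1)
    (hx : ∀ᶠ k : ℕ in atTop,
      |x k - ((k : ℝ) + 1) / 2| ≤ ((k : ℝ) + 1) ^ (-α) * (((k : ℝ) + 1) / 2)) :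
    ∀ᶠ k : ℕ in atTop, |x k / x (k + 1) - 1| ≤ 6 * ((k : ℝ) + 1) ^ (-α) := by
  filter_upwards [hx, (tendsto_add_atTop_nat 1).eventually hx,
    eventually_rpow_neg_le_and_one_le hα0 hα] with k hk hk' ⟨hd, had⟩
  have hmono : ((k : ℝ) + 2) ^ (-α) ≤ ((k : ℝ) + 1) ^ (-α) :=
    rpow_le_rpow_of_nonpos (by positivity) (by linarith) (by linarith)
  have hk'' : |x (k + 1) - ((k : ℝ) + 2) / 2| ≤ ((k : ℝ) + 2) ^ (-α) * (((k : ℝ) + 2) / 2) := by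
    convert hk' using 3 <;> push_cast <;> ring
  exact abs_div_sub_one_le (by linarith) (by linarith) (by positivity) hd had hk
    (hk''.trans (mul_le_mul_of_nonneg_right hmono (by positivity)))

theorem ratios_lp_summable_general {Ω : Type*} [MeasurableSpace Ω] (μ : Measure Ω)
    (η : ℕ → Ω → ℝ) (hηm : ∀ j, Measurable (η j))
    (hlaw : ∀ j, 1 ≤ j → μ.map (η j) = gammaMeasure ((j : ℝ) / 2) 1)
    (p : ℝ) (hp : 2 < p) :
    ∀ᵐ ω ∂μ, Summable (fun k : ℕ => |η (k + 1) ω / η (k + 2) ω - 1| ^ p) := by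
  obtain ⟨α, hpα, hα⟩ := exists_between (one_div_lt_one_div_of_lt two_pos hp)
  have hα0 : 0 < α := (one_div_pos.mpr (by linarith)).trans hpα
  have hαp : 1 < α * p := by rwa [div_lt_iff₀ (by linarith)] at hpα
  have hconc := ae_eventually_abs_sub_le_of_map_eq_gammaMeasure (X := fun k => η (k + 1))
    (fun k => (hηm _).aemeasurable) (fun k => by rw [hlaw _ k.succ_pos]; push_cast; rfl)
    hα0.le hα
  have hg : Summable fun k : ℕ => 6 ^ p * ((k : ℝ) + 1) ^ (-(α * p)) := by
    have := (summable_nat_add_iff 1).mpr (Real.summable_nat_rpow.mpr (neg_lt_neg hαp))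
    exact_mod_cast this.mul_left (6 ^ p)
  filter_upwards [hconc] with ω hω
  refine hg.of_norm_bounded_eventually_nat ?_
  filter_upwards [eventually_abs_div_succ_sub_one_le hα0 (by linarith) hω] with k hratio
  rw [norm_eq_abs, abs_of_nonneg (by positivity), ← neg_mul, rpow_mul (by positivity),
    ← mul_rpow (by norm_num) (by positivity)]
  exact rpow_le_rpow (abs_nonneg _) hratio (by linarith)

theorem ratios_lp_summable {Ω : Type*} [MeasurableSpace Ω] (μ : Measure Ω)
    [IsProbabilityMeasure μ] (η : ℕ → Ω → ℝ) (hηm : ∀ j, Measurable (η j))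
    (hindep : iIndepFun η μ)
    (hlaw : ∀ j, 1 ≤ j → μ.map (η j) = gammaMeasure ((j : ℝ) / 2) 1)
    (p : ℝ) (hp : 2 < p) :
    ∀ᵐ ω ∂μ, Summable (fun k : ℕ => |η (k + 1) ω / η (k + 2) ω - 1| ^ p) :=
  ratios_lp_summable_general μ η hηm hlaw p hp
end

section
/- Let (η_j)_{j≥1} be independent with η_j ~ Gamma(j/2), R_j = η_j/η_{j+1}, and M^k = inf{R_j : j ≥ k+1}. There exists τ > 0 such that for each k ≥ 0, limsup_{y→1-} e^{τ/(1-y)²} P(M^k ≥ y) < ∞. -/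
open MeasureTheory ProbabilityTheory Real Set Filter

open scoped ENNReal Topology

/-!
On `{M^k ≥ y}` we have `y η_{j+1} ≤ η_j` for the `m` disjoint, hence independent, pairs
`(η_j, η_{j+1})` with `j = k + 2 + 2 i`, `i < m`. For independent `X ~ Γ(a)` and
`X' ~ Γ(a + 1/2)`, `P(y X' ≤ X) ≤ P(X' ≤ X) + P(y X' ≤ X < X')`. The first term is at most
`1/2` because the density ratio of `Γ(a + 1/2)` to `Γ(a)` is increasing. The second is at most
`√(2 (1 - y) √a)`: given `X = t`, the event is `X' ∈ (t, t / y]`, an interval of length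
`≤ 2 (1 - y) t` whose `Γ(a + 1/2)`-mass is at most `√length · ‖density‖₂` by Cauchy–Schwarz,
with `‖density‖₂² ≤ a^{-1/2}` (Legendre duplication), and `E √X ≤ √a`. So each pair has
probability at most `3/4` as long as `(1 - y)² j` is small, which leaves room for
`m ≍ (1 - y)⁻²` pairs and gives `P(M^k ≥ y) ≤ e^{1/4} e^{-τ / (1 - y)²}`.
-/

namespace Real

theorem Gamma_add_half_le_sqrt_mul_Gamma {x : ℝ} (hx : 0 < x) :
    Gamma (x + 1 / 2) ≤ √x * Gamma x := by
  have hΓ := (Gamma_pos_of_pos hx).le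
  have h := Gamma_mul_add_mul_le_rpow_Gamma_mul_rpow_Gamma hx (by linarith : 0 < x + 1)
    one_half_pos one_half_pos (add_halves 1)
  rw [show 1 / 2 * x + 1 / 2 * (x + 1) = x + 1 / 2 by ring, Gamma_add_one hx.ne',
    ← sqrt_eq_rpow, ← sqrt_eq_rpow, sqrt_mul hx.le, ← mul_assoc, mul_comm (√(Gamma x)),
    mul_assoc, mul_self_sqrt hΓ] at h
  exact h

theorem half_rpow_two_mul_mul_Gamma_two_mul_le {x : ℝ} (hx : 1 / 2 ≤ x) :
    (1 / 2) ^ (2 * x) * Gamma (2 * x) ≤ Gamma (x + 1 / 2) ^ 2 / √x := by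
  have hx0 : 0 < x := by linarith
  have hΓ' := Gamma_pos_of_pos (by linarith : 0 < x + 1 / 2)
  have hdup : (1 / 2) ^ (2 * x) * Gamma (2 * x) = Gamma x * Gamma (x + 1 / 2) / (2 * √π) := by
    rw [Gamma_mul_Gamma_add_half, one_div, inv_rpow zero_le_two, ← rpow_neg zero_le_two,
      show 1 - 2 * x = 1 + -(2 * x) by ring, rpow_add two_pos, rpow_one]
    field_simp
  have hstep := Gamma_add_half_le_sqrt_mul_Gamma (by linarith : 0 < x + 1 / 2)
  rw [show x + 1 / 2 + 1 / 2 = x + 1 by ring, Gamma_add_one hx0.ne'] at hstep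
  have hkey : √x * Gamma x ≤ √2 * Gamma (x + 1 / 2) := by
    refine le_of_mul_le_mul_left ?_ (sqrt_pos.mpr hx0)
    calc √x * (√x * Gamma x) = x * Gamma x := by rw [← mul_assoc, mul_self_sqrt hx0.le]
      _ ≤ √(x + 1 / 2) * Gamma (x + 1 / 2) := hstep
      _ ≤ √(2 * x) * Gamma (x + 1 / 2) := by gcongr; linarith
      _ = √x * (√2 * Gamma (x + 1 / 2)) := by rw [sqrt_mul zero_le_two]; ring
  have hsqrt2 : √2 ≤ 2 * √π :=
    (sqrt_le_sqrt (by linarith [pi_gt_three] : (2 : ℝ) ≤ π)).trans (by linarith [sqrt_nonneg π])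
  rw [hdup, div_le_div_iff₀ (by positivity) (sqrt_pos.mpr hx0)]
  have := hkey.trans (mul_le_mul_of_nonneg_right hsqrt2 hΓ'.le)
  nlinarith [mul_le_mul_of_nonneg_right this hΓ'.le]

-- `0 < y` excludes the junk value `0` of `⨅` over a family that is not bounded below.
theorem le_of_le_iInf {ι : Type*} {f : ι → ℝ} {y : ℝ} (hy : 0 < y) (h : y ≤ ⨅ i, f i)
    (i : ι) : y ≤ f i := by
  by_cases hf : BddBelow (Set.range f)
  · exact h.trans (ciInf_le hf i)
  · rw [Real.iInf_of_not_bddBelow hf] at h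
    exact absurd h (not_le.mpr hy)

theorem exp_div_four_mul_pow_floor_le (x : ℝ) :
    exp (x / 4) * (3 / 4 : ℝ) ^ ⌊x⌋₊ ≤ exp (1 / 4) := by
  have h34 : (3 / 4 : ℝ) ≤ exp (-(1 / 4)) := by linarith [add_one_le_exp (-(1 / 4 : ℝ))]
  calc exp (x / 4) * (3 / 4 : ℝ) ^ ⌊x⌋₊
      ≤ exp (x / 4) * exp (-(1 / 4)) ^ ⌊x⌋₊ := by gcongr
    _ = exp ((x - ⌊x⌋₊) / 4) := by rw [← exp_nat_mul, ← exp_add]; ring_nf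
    _ ≤ exp (1 / 4) := by gcongr; linarith [Nat.lt_floor_add_one x]

end Real

namespace MeasureTheory

theorem setLIntegral_le_measure_rpow_mul_lintegral_sq {α : Type*}
    [MeasurableSpace α] {μ : Measure α} {g : α → ℝ≥0∞} (hg : AEMeasurable g μ) (s : Set α) :
    ∫⁻ x in s, g x ∂μ ≤ μ s ^ (1 / 2 : ℝ) * (∫⁻ x, g x ^ 2 ∂μ) ^ (1 / 2 : ℝ) := by
  have h := ENNReal.lintegral_mul_le_Lp_mul_Lq (μ.restrict s)
    Real.HolderConjugate.two_two aemeasurable_const hg.restrict (f := 1)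
  simp only [Pi.mul_apply, Pi.one_apply, one_mul, one_pow, lintegral_const,
    Measure.restrict_apply_univ, ENNReal.rpow_two] at h
  exact h.trans (by gcongr; exact Measure.restrict_le_self)

section MonotoneLikelihoodRatio

variable {μ : Measure ℝ} [SFinite μ] {f g : ℝ → ℝ≥0∞}

theorem withDensity_prod_lt_le_of_mul_le (hf : Measurable f) (hg : Measurable g)
    (h : ∀ s t, s ≤ t → f t * g s ≤ f s * g t) :
    ((μ.withDensity f).prod (μ.withDensity g)) {p | p.2 < p.1} ≤
      ((μ.withDensity f).prod (μ.withDensity g)) {p | p.1 < p.2} := by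
  rw [prod_withDensity hf hg,
    withDensity_apply _ (measurableSet_lt measurable_snd measurable_fst),
    withDensity_apply _ (measurableSet_lt measurable_fst measurable_snd)]
  calc ∫⁻ p in {p | p.2 < p.1}, f p.1 * g p.2 ∂μ.prod μ
      ≤ ∫⁻ p in {p | p.2 < p.1}, f p.2 * g p.1 ∂μ.prod μ :=
        setLIntegral_mono' (measurableSet_lt measurable_snd measurable_fst)
          fun p hp => h _ _ (le_of_lt hp)
    _ = ∫⁻ p in {p | p.1 < p.2}, f p.1 * g p.2 ∂μ.prod μ :=
        Measure.measurePreserving_swap.setLIntegral_comp_preimage_emb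
          MeasurableEquiv.prodComm.measurableEmbedding (fun p => f p.1 * g p.2)
          {p | p.1 < p.2}

theorem withDensity_prod_le_le_half [NullSingletonClass μ] (hf : Measurable f)
    (hg : Measurable g) [IsProbabilityMeasure (μ.withDensity f)]
    [IsProbabilityMeasure (μ.withDensity g)]
    (h : ∀ s t, s ≤ t → f t * g s ≤ f s * g t) :
    ((μ.withDensity f).prod (μ.withDensity g)) {p | p.2 ≤ p.1} ≤ 2⁻¹ := by
  set P := (μ.withDensity f).prod (μ.withDensity g)
  have hdiag : P {p | p.2 = p.1} = 0 := by
    rw [Measure.prod_apply (measurableSet_eq_fun measurable_snd measurable_fst)]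
    refine lintegral_eq_zero_of_ae_eq_zero (ae_of_all _ fun t => ?_)
    show μ.withDensity g (Prod.mk t ⁻¹' {p : ℝ × ℝ | p.2 = p.1}) = 0
    rw [show Prod.mk t ⁻¹' {p : ℝ × ℝ | p.2 = p.1} = {t} by ext; simp [eq_comm]]
    exact withDensity_absolutelyContinuous μ g (measure_singleton t)
  have hle : P {p | p.2 ≤ p.1} ≤ P {p | p.1 < p.2} :=
    calc P {p | p.2 ≤ p.1} ≤ P ({p | p.2 < p.1} ∪ {p | p.2 = p.1}) :=
          measure_mono fun p (hp : p.2 ≤ p.1) => show p.2 < p.1 ∨ p.2 = p.1 from hp.lt_or_eq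
      _ ≤ P {p | p.2 < p.1} := (measure_union_le _ _).trans (by rw [hdiag, add_zero])
      _ ≤ P {p | p.1 < p.2} := withDensity_prod_lt_le_of_mul_le hf hg h
  have hsum : P {p | p.2 ≤ p.1} + P {p | p.1 < p.2} = 1 := by
    simpa [compl_ofPred, not_le] using
      measure_add_measure_compl (μ := P) (measurableSet_le measurable_snd measurable_fst)
  rw [ENNReal.le_inv_iff_mul_le, mul_two, ← hsum]
  gcongr

end MonotoneLikelihoodRatio

end MeasureTheory

namespace ProbabilityTheory

@[fun_prop]
theorem measurable_gammaPDF (a r : ℝ) : Measurable (gammaPDF a r) :=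
  (measurable_gammaPDFReal a r).ennreal_ofReal

theorem gammaPDF_mul_sqrt {a : ℝ} (ha : 1 / 2 < a) (x : ℝ) :
    gammaPDF a 1 x * ENNReal.ofReal √x =
      ENNReal.ofReal (Gamma (a + 1 / 2) / Gamma a) * gammaPDF (a + 1 / 2) 1 x := by
  rcases lt_or_ge x 0 with hx | hx
  · simp [gammaPDF_of_neg hx]
  rw [gammaPDF_of_nonneg hx, gammaPDF_of_nonneg hx, ← ENNReal.ofReal_mul (by positivity),
    ← ENNReal.ofReal_mul (by positivity), sqrt_eq_rpow,
    show a + 1 / 2 - 1 = a - 1 + 1 / 2 by ring, rpow_add' hx (by linarith)]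
  congr 1
  simp only [one_rpow]
  field_simp

theorem lintegral_sqrt_gammaMeasure {a : ℝ} (ha : 1 / 2 < a) :
    ∫⁻ x, ENNReal.ofReal √x ∂gammaMeasure a 1 =
      ENNReal.ofReal (Gamma (a + 1 / 2) / Gamma a) := by
  rw [gammaMeasure, lintegral_withDensity_eq_lintegral_mul _ (measurable_gammaPDF a 1)
    (by fun_prop)]
  simp_rw [Pi.mul_apply, gammaPDF_mul_sqrt ha]
  rw [lintegral_const_mul _ (measurable_gammaPDF _ 1),
    lintegral_gammaPDF_eq_one (by linarith) one_pos, mul_one]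

theorem gammaPDF_add_half_sq {a : ℝ} (ha : 0 < a) (x : ℝ) :
    gammaPDF (a + 1 / 2) 1 x ^ 2 =
      ENNReal.ofReal ((1 / 2) ^ (2 * a) * Gamma (2 * a) / Gamma (a + 1 / 2) ^ 2) *
        gammaPDF (2 * a) 2 x := by
  rcases lt_or_ge x 0 with hx | hx
  · simp [gammaPDF_of_neg hx]
  rw [gammaPDF_of_nonneg hx, gammaPDF_of_nonneg hx, ← ENNReal.ofReal_pow (by positivity),
    ← ENNReal.ofReal_mul (by positivity)]
  congr 1
  have hpow : x ^ (2 * a - 1) = (x ^ (a + 1 / 2 - 1)) ^ 2 := by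
    rw [← rpow_natCast, ← rpow_mul hx]; ring_nf
  have hexp : exp (-(2 * x)) = exp (-(1 * x)) ^ 2 := by rw [← exp_nat_mul]; ring_nf
  rw [hpow, hexp, div_rpow zero_le_one zero_le_two, one_rpow, one_rpow]
  field_simp

theorem lintegral_gammaPDF_add_half_sq {a : ℝ} (ha : 0 < a) :
    ∫⁻ x, gammaPDF (a + 1 / 2) 1 x ^ 2 =
      ENNReal.ofReal ((1 / 2) ^ (2 * a) * Gamma (2 * a) / Gamma (a + 1 / 2) ^ 2) := by
  simp_rw [gammaPDF_add_half_sq ha]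
  rw [lintegral_const_mul _ (measurable_gammaPDF _ 2),
    lintegral_gammaPDF_eq_one (by linarith) two_pos, mul_one]

theorem gammaMeasure_add_half_Ioc_le {a : ℝ} (ha : 1 / 2 ≤ a) (s t : ℝ) :
    gammaMeasure (a + 1 / 2) 1 (Ioc s t) ≤ ENNReal.ofReal √((t - s) / √a) := by
  rcases le_or_gt t s with hts | hst
  · simp [Ioc_eq_empty_of_le hts]
  have ha0 : 0 < a := by linarith
  have hL2 : ∫⁻ x, gammaPDF (a + 1 / 2) 1 x ^ 2 ≤ ENNReal.ofReal (1 / √a) := by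
    rw [lintegral_gammaPDF_add_half_sq ha0]
    refine ENNReal.ofReal_le_ofReal ?_
    have := Gamma_pos_of_pos (by linarith : 0 < a + 1 / 2)
    rw [div_le_iff₀ (by positivity), ← mul_div_right_comm, one_mul]
    exact half_rpow_two_mul_mul_Gamma_two_mul_le ha
  calc gammaMeasure (a + 1 / 2) 1 (Ioc s t)
      = ∫⁻ x in Ioc s t, gammaPDF (a + 1 / 2) 1 x := withDensity_apply _ measurableSet_Ioc
    _ ≤ volume (Ioc s t) ^ (1 / 2 : ℝ) *
          (∫⁻ x, gammaPDF (a + 1 / 2) 1 x ^ 2) ^ (1 / 2 : ℝ) :=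
      setLIntegral_le_measure_rpow_mul_lintegral_sq (by fun_prop) _
    _ ≤ ENNReal.ofReal (t - s) ^ (1 / 2 : ℝ) * ENNReal.ofReal (1 / √a) ^ (1 / 2 : ℝ) := by
      rw [volume_Ioc]; gcongr
    _ = ENNReal.ofReal √((t - s) / √a) := by
      rw [ENNReal.ofReal_rpow_of_nonneg (by linarith) (by norm_num),
        ENNReal.ofReal_rpow_of_nonneg (by positivity) (by norm_num), ← sqrt_eq_rpow,
        ← sqrt_eq_rpow, ← ENNReal.ofReal_mul (sqrt_nonneg _), ← sqrt_mul (by linarith),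
        mul_one_div]

theorem gammaMeasure_add_half_Ioc_div_le {a y : ℝ} (ha : 1 / 2 ≤ a) (hy : 1 / 2 ≤ y)
    (hy1 : y ≤ 1) (t : ℝ) :
    gammaMeasure (a + 1 / 2) 1 (Ioc t (t / y)) ≤
      ENNReal.ofReal (√(2 * (1 - y) / √a) * √t) := by
  have hy0 : 0 < y := by linarith
  rcases lt_or_ge t 0 with ht | ht
  · rw [Ioc_eq_empty (not_lt.mpr ((div_le_iff₀ hy0).mpr (by nlinarith)))]
    simp
  refine (gammaMeasure_add_half_Ioc_le ha t (t / y)).trans (ENNReal.ofReal_le_ofReal ?_)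
  rw [← sqrt_mul (div_nonneg (by linarith) (sqrt_nonneg a)), div_mul_eq_mul_div]
  gcongr
  rw [sub_le_iff_le_add, div_le_iff₀ hy0]
  have h2y : 0 ≤ 2 * y - 1 := by linarith
  nlinarith [mul_nonneg (mul_nonneg ht h2y) (by linarith : 0 ≤ 1 - y)]

theorem gammaPDF_mul_gammaPDF_le {a b : ℝ} (ha : 0 < a) (hab : a ≤ b) (hb : 1 < b) {s t : ℝ}
    (hst : s ≤ t) : gammaPDF a 1 t * gammaPDF b 1 s ≤ gammaPDF a 1 s * gammaPDF b 1 t := by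
  rcases lt_or_ge s 0 with hs | hs
  · simp [gammaPDF_of_neg hs]
  have ht : 0 ≤ t := hs.trans hst
  rw [gammaPDF_of_nonneg hs, gammaPDF_of_nonneg hs, gammaPDF_of_nonneg ht,
    gammaPDF_of_nonneg ht, ← ENNReal.ofReal_mul (by positivity),
    ← ENNReal.ofReal_mul (by positivity)]
  refine ENNReal.ofReal_le_ofReal ?_
  -- the likelihood ratio `x ^ (b - a)` is nondecreasing
  have hratio : t ^ (a - 1) * s ^ (b - 1) ≤ s ^ (a - 1) * t ^ (b - 1) := by
    rcases hs.eq_or_lt with rfl | hs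
    · rw [zero_rpow (by linarith)]; simp only [mul_zero]; positivity
    rw [show b - 1 = a - 1 + (b - a) by ring, rpow_add hs, rpow_add (hs.trans_le hst)]
    have := rpow_le_rpow hs.le hst (by linarith : 0 ≤ b - a)
    calc t ^ (a - 1) * (s ^ (a - 1) * s ^ (b - a))
        = (t ^ (a - 1) * s ^ (a - 1)) * s ^ (b - a) := by ring
      _ ≤ (t ^ (a - 1) * s ^ (a - 1)) * t ^ (b - a) := by gcongr
      _ = s ^ (a - 1) * (t ^ (a - 1) * t ^ (b - a)) := by ring
  simp only [one_rpow, one_mul]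
  calc 1 / Gamma a * t ^ (a - 1) * exp (-t) * (1 / Gamma b * s ^ (b - 1) * exp (-s))
      = exp (-t) * exp (-s) / (Gamma a * Gamma b) * (t ^ (a - 1) * s ^ (b - 1)) := by ring
    _ ≤ exp (-t) * exp (-s) / (Gamma a * Gamma b) * (s ^ (a - 1) * t ^ (b - 1)) := by gcongr
    _ = 1 / Gamma a * s ^ (a - 1) * exp (-s) * (1 / Gamma b * t ^ (b - 1) * exp (-t)) := by
      ring

theorem gammaMeasure_prod_le_le_half {a : ℝ} (ha : 1 / 2 < a) :
    ((gammaMeasure a 1).prod (gammaMeasure (a + 1 / 2) 1)) {p | p.2 ≤ p.1} ≤ 2⁻¹ := by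
  have : IsProbabilityMeasure (volume.withDensity (gammaPDF a 1)) :=
    isProbabilityMeasure_gammaMeasure (by linarith) one_pos
  have : IsProbabilityMeasure (volume.withDensity (gammaPDF (a + 1 / 2) 1)) :=
    isProbabilityMeasure_gammaMeasure (by linarith) one_pos
  exact withDensity_prod_le_le_half (measurable_gammaPDF a 1) (measurable_gammaPDF _ 1)
    fun s t hst => gammaPDF_mul_gammaPDF_le (by linarith) (by linarith) (by linarith) hst

theorem gammaMeasure_prod_strip_le {a y : ℝ} (ha : 1 / 2 < a) (hy : 1 / 2 ≤ y)
    (hy1 : y ≤ 1) :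
    ((gammaMeasure a 1).prod (gammaMeasure (a + 1 / 2) 1))
        {p | y * p.2 ≤ p.1 ∧ p.1 < p.2} ≤
      ENNReal.ofReal √(2 * (1 - y) * √a) := by
  have ha0 : 0 < a := by linarith
  set c := 2 * (1 - y) / √a with hc
  have hc0 : 0 ≤ c := div_nonneg (by linarith) (sqrt_nonneg a)
  have hslice (t : ℝ) :
      gammaMeasure (a + 1 / 2) 1 (Prod.mk t ⁻¹' {p | y * p.2 ≤ p.1 ∧ p.1 < p.2}) ≤
        ENNReal.ofReal (√c * √t) := by
    refine (measure_mono fun s (hs : y * s ≤ t ∧ t < s) => ?_).trans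
      (gammaMeasure_add_half_Ioc_div_le ha.le hy hy1 t)
    exact ⟨hs.2, (le_div_iff₀ (by linarith)).mpr (by linarith [hs.1])⟩
  have hmoment : ∫⁻ t, ENNReal.ofReal √t ∂gammaMeasure a 1 ≤ ENNReal.ofReal √a := by
    rw [lintegral_sqrt_gammaMeasure ha]
    exact ENNReal.ofReal_le_ofReal ((div_le_iff₀ (Gamma_pos_of_pos ha0)).mpr
      (Gamma_add_half_le_sqrt_mul_Gamma ha0))
  have := isProbabilityMeasure_gammaMeasure (by linarith : 0 < a + 1 / 2) one_pos
  have hS : MeasurableSet {p : ℝ × ℝ | y * p.2 ≤ p.1 ∧ p.1 < p.2} :=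
    (measurableSet_le (by fun_prop) measurable_fst).inter
      (measurableSet_lt measurable_fst measurable_snd)
  rw [Measure.prod_apply hS]
  calc _ ≤ ∫⁻ t, ENNReal.ofReal (√c * √t) ∂gammaMeasure a 1 := lintegral_mono hslice
    _ = ENNReal.ofReal √c * ∫⁻ t, ENNReal.ofReal √t ∂gammaMeasure a 1 := by
      simp_rw [ENNReal.ofReal_mul (sqrt_nonneg c)]
      exact lintegral_const_mul _ (by fun_prop)
    _ ≤ ENNReal.ofReal √c * ENNReal.ofReal √a := by gcongr
    _ = ENNReal.ofReal √(2 * (1 - y) * √a) := by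
      rw [← ENNReal.ofReal_mul (sqrt_nonneg c), ← sqrt_mul hc0, hc, div_mul_eq_mul_div,
        mul_div_assoc, div_sqrt]

theorem gammaMeasure_prod_mul_le_le {a y : ℝ} (ha : 1 / 2 < a) (hy : 1 / 2 ≤ y) (hy1 : y ≤ 1)
    (hya : (1 - y) ^ 2 * a ≤ 1 / 1024) :
    ((gammaMeasure a 1).prod (gammaMeasure (a + 1 / 2) 1)) {p | y * p.2 ≤ p.1} ≤
      ENNReal.ofReal (3 / 4) := by
  have hsqrt : √(2 * (1 - y) * √a) ≤ 1 / 4 := by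
    rw [sqrt_le_left (by norm_num)]
    nlinarith [sq_sqrt (by linarith : 0 ≤ a), sqrt_nonneg a]
  calc _ ≤ ((gammaMeasure a 1).prod (gammaMeasure (a + 1 / 2) 1))
          ({p | p.2 ≤ p.1} ∪ {p | y * p.2 ≤ p.1 ∧ p.1 < p.2}) :=
        measure_mono fun p hp => (le_or_gt p.2 p.1).imp id fun h => ⟨hp, h⟩
    _ ≤ 2⁻¹ + ENNReal.ofReal √(2 * (1 - y) * √a) :=
        (measure_union_le _ _).trans
          (add_le_add (gammaMeasure_prod_le_le_half ha) (gammaMeasure_prod_strip_le ha hy hy1))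
    _ ≤ ENNReal.ofReal (3 / 4) := by
      have hhalf : (2⁻¹ : ℝ≥0∞) = ENNReal.ofReal (1 / 2) := by
        rw [ENNReal.ofReal_div_of_pos two_pos]; simp
      rw [hhalf, ← ENNReal.ofReal_add (by norm_num) (sqrt_nonneg _)]
      exact ENNReal.ofReal_le_ofReal (by linarith)

section Independence

variable {Ω : Type*} [MeasurableSpace Ω] {μ : Measure Ω}

theorem ae_pos_of_map_eq_gammaMeasure {X : Ω → ℝ} (hX : Measurable X) {a r : ℝ}
    (hlaw : μ.map X = gammaMeasure a r) : ∀ᵐ ω ∂μ, 0 < X ω := by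
  simp_rw [ae_iff, not_lt]
  rw [show {ω | X ω ≤ 0} = X ⁻¹' Iic 0 from rfl, ← Measure.map_apply hX measurableSet_Iic,
    hlaw, gammaMeasure, withDensity_apply _ measurableSet_Iic, ← setLIntegral_congr Iio_ae_eq_Iic]
  exact lintegral_gammaPDF_of_nonpos le_rfl

theorem IndepFun.measure_mul_le_le {X Y : Ω → ℝ} (hX : Measurable X) (hY : Measurable Y)
    (hXY : IndepFun X Y μ) [IsFiniteMeasure μ] {a y : ℝ}
    (hXlaw : μ.map X = gammaMeasure a 1) (hYlaw : μ.map Y = gammaMeasure (a + 1 / 2) 1)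
    (ha : 1 / 2 < a) (hy : 1 / 2 ≤ y) (hy1 : y ≤ 1) (hya : (1 - y) ^ 2 * a ≤ 1 / 1024) :
    μ {ω | y * Y ω ≤ X ω} ≤ ENNReal.ofReal (3 / 4) := by
  rw [show {ω | y * Y ω ≤ X ω} = (fun ω => (X ω, Y ω)) ⁻¹' {p | y * p.2 ≤ p.1} from rfl,
    ← Measure.map_apply (hX.prodMk hY) (measurableSet_le (by fun_prop) measurable_fst),
    (indepFun_iff_map_prod_eq_prod_map_map hX.aemeasurable hY.aemeasurable).mp hXY,
    hXlaw, hYlaw]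
  exact gammaMeasure_prod_mul_le_le ha hy hy1 hya

theorem iIndepFun.measure_biInter_pairs_le_pow {η : ℕ → Ω → ℝ} (hindep : iIndepFun η μ)
    (hηm : ∀ j, Measurable (η j)) {E : Set (ℝ × ℝ)} (hE : MeasurableSet E) {c : ℝ≥0∞}
    (b : ℕ) :
    ∀ m : ℕ, (∀ i < m, μ {ω | (η (b + 2 * i) ω, η (b + 2 * i + 1) ω) ∈ E} ≤ c) →
      μ (⋂ i ∈ Finset.range m, {ω | (η (b + 2 * i) ω, η (b + 2 * i + 1) ω) ∈ E}) ≤ c ^ m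
  | 0, _ => by have := hindep.isProbabilityMeasure; simp
  | m + 1, h => by
    set S : Finset ℕ := {b + 2 * m, b + 2 * m + 1}
    set T : Finset ℕ := Finset.range (b + 2 * m)
    have hST : Disjoint S T := by
      simp only [S, T, Finset.disjoint_insert_left, Finset.disjoint_singleton_left,
        Finset.mem_range]
      omega
    have hS : b + 2 * m ∈ S ∧ b + 2 * m + 1 ∈ S := by simp [S]
    have hT (i : ℕ) (hi : i < m) : b + 2 * i ∈ T ∧ b + 2 * i + 1 ∈ T := by
      simp only [T, Finset.mem_range]; omega
    have hlast : {ω | (η (b + 2 * m) ω, η (b + 2 * m + 1) ω) ∈ E} =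
        (fun ω (j : S) => η j ω) ⁻¹' ((fun v => (v ⟨_, hS.1⟩, v ⟨_, hS.2⟩)) ⁻¹' E) := rfl
    have hprev : ⋂ i ∈ Finset.range m, {ω | (η (b + 2 * i) ω, η (b + 2 * i + 1) ω) ∈ E} =
        (fun ω (j : T) => η j ω) ⁻¹'
          {v | ∀ i (hi : i < m), (v ⟨_, (hT i hi).1⟩, v ⟨_, (hT i hi).2⟩) ∈ E} := by
      ext; simp
    have hprev_meas : MeasurableSet
        {v : T → ℝ | ∀ i (hi : i < m), (v ⟨_, (hT i hi).1⟩, v ⟨_, (hT i hi).2⟩) ∈ E} :=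
      measurableSet_setOfPred.mpr <| Measurable.forall fun i => Measurable.forall fun hi =>
        measurableSet_setOfPred.mp (hE.preimage (by fun_prop))
    rw [Finset.range_add_one, Finset.set_biInter_insert, hlast, hprev,
      (hindep.indepFun_finset S T hST hηm).measure_inter_preimage_eq_mul _ _
        (hE.preimage (by fun_prop)) hprev_meas, ← hlast, ← hprev, pow_succ']
    exact mul_le_mul' (h m (by omega))
      (hindep.measure_biInter_pairs_le_pow hηm hE b m fun i hi => h i (by omega))

theorem measure_le_iInf_ratio_le_pow {η : ℕ → Ω → ℝ} (hηm : ∀ j, Measurable (η j))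
    (hindep : iIndepFun η μ)
    (hlaw : ∀ j, 1 ≤ j → μ.map (η j) = gammaMeasure ((j : ℝ) / 2) 1) (k m : ℕ) {y : ℝ}
    (hy : 1 / 2 ≤ y) (hy1 : y ≤ 1) (hkm : (1 - y) ^ 2 * (k + 2 + 2 * m) ≤ 1 / 512) :
    μ {ω | y ≤ ⨅ j : {j : ℕ // k + 1 ≤ j}, η j.1 ω / η (j.1 + 1) ω} ≤
      ENNReal.ofReal (3 / 4) ^ m := by
  have hpos : ∀ᵐ ω ∂μ, ∀ j, 0 < η (j + 1) ω :=
    ae_all_iff.2 fun j => ae_pos_of_map_eq_gammaMeasure (hηm _) (hlaw (j + 1) (by omega))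
  have := hindep.isProbabilityMeasure
  have hsub : {ω | y ≤ ⨅ j : {j : ℕ // k + 1 ≤ j}, η j.1 ω / η (j.1 + 1) ω} ≤ᵐ[μ]
      ⋂ i ∈ Finset.range m, {ω | (η (k + 2 + 2 * i) ω, η (k + 2 + 2 * i + 1) ω) ∈
        {p : ℝ × ℝ | y * p.2 ≤ p.1}} := by
    refine hpos.mono fun ω hω (hle : y ≤ _) => ?_
    show ω ∈ ⋂ i ∈ Finset.range m, _
    exact mem_iInter₂.mpr fun i _ => (le_div_iff₀ (hω _)).mp
      (Real.le_of_le_iInf (by linarith) hle ⟨k + 2 + 2 * i, by omega⟩)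
  refine (measure_mono_ae hsub).trans (hindep.measure_biInter_pairs_le_pow hηm
    (measurableSet_le (by fun_prop) measurable_fst) (k + 2) m fun i hi => ?_)
  have hi' : (i : ℝ) + 1 ≤ m := by exact_mod_cast hi
  refine IndepFun.measure_mul_le_le (hηm _) (hηm _) (hindep.indepFun (by omega))
    (hlaw _ (by omega)) ?_ ?_ hy hy1 ?_
  · rw [hlaw _ (by omega)]; push_cast; ring_nf
  · push_cast; linarith
  · push_cast
    nlinarith [sq_nonneg (1 - y)]

end Independence

end ProbabilityTheory

theorem inf_ratio_right_tail_general {Ω : Type*} [MeasurableSpace Ω] (μ : Measure Ω)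
    (η : ℕ → Ω → ℝ) (hηm : ∀ j, Measurable (η j))
    (hindep : iIndepFun η μ)
    (hlaw : ∀ j, 1 ≤ j → μ.map (η j) = gammaMeasure ((j : ℝ) / 2) 1) :
    ∃ τ : ℝ, 0 < τ ∧ ∀ k : ℕ, ∃ C : ℝ,
      ∀ᶠ y in nhdsWithin 1 (Set.Iio 1),
        Real.exp (τ / (1 - y) ^ 2) *
          (μ {ω | y ≤ ⨅ j : {j : ℕ // k + 1 ≤ j}, η j.1 ω / η (j.1 + 1) ω}).toReal ≤ C := by
  refine ⟨1 / 8192, by norm_num, fun k => ⟨exp (1 / 4), ?_⟩⟩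
  have hnear : ∀ᶠ y : ℝ in 𝓝 1, 1 / 2 < y ∧ (1 - y) ^ 2 * ((k : ℝ) + 2) < 1 / 1024 :=
    (eventually_gt_nhds (by norm_num)).and
      ((by fun_prop : Continuous fun y : ℝ => (1 - y) ^ 2 * (k + 2)).continuousAt
        |>.eventually_lt continuousAt_const (by norm_num))
  filter_upwards [eventually_nhdsWithin_of_eventually_nhds hnear, self_mem_nhdsWithin]
    with y ⟨hy, hyk⟩ (hy1 : y < 1)
  set x := 1 / (2048 * (1 - y) ^ 2) with hx
  have hy1' : 1 - y ≠ 0 := by linarith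
  have hxy : (1 - y) ^ 2 * x = 1 / 2048 := by rw [hx]; field_simp
  have hm : (1 - y) ^ 2 * (k + 2 + 2 * ⌊x⌋₊) ≤ 1 / 512 := by
    nlinarith [Nat.floor_le (by positivity : 0 ≤ x), sq_nonneg (1 - y)]
  have htail := ENNReal.toReal_mono (by simp)
    (measure_le_iInf_ratio_le_pow hηm hindep hlaw k ⌊x⌋₊ hy.le hy1.le hm)
  rw [ENNReal.toReal_pow, ENNReal.toReal_ofReal (by norm_num)] at htail
  calc exp (1 / 8192 / (1 - y) ^ 2) * _ ≤ exp (x / 4) * (3 / 4 : ℝ) ^ ⌊x⌋₊ := by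
        rw [show 1 / 8192 / (1 - y) ^ 2 = x / 4 by rw [hx]; field_simp; norm_num]
        gcongr
    _ ≤ exp (1 / 4) := exp_div_four_mul_pow_floor_le x

theorem inf_ratio_right_tail {Ω : Type*} [MeasurableSpace Ω] (μ : Measure Ω)
    [IsProbabilityMeasure μ] (η : ℕ → Ω → ℝ) (hηm : ∀ j, Measurable (η j))
    (hindep : iIndepFun η μ)
    (hlaw : ∀ j, 1 ≤ j → μ.map (η j) = gammaMeasure ((j : ℝ) / 2) 1) :
    ∃ τ : ℝ, 0 < τ ∧ ∀ k : ℕ, ∃ C : ℝ,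
      ∀ᶠ y in nhdsWithin 1 (Set.Iio 1),
        Real.exp (τ / (1 - y) ^ 2) *
          (μ {ω | y ≤ ⨅ j : {j : ℕ // k + 1 ≤ j}, η j.1 ω / η (j.1 + 1) ω}).toReal ≤ C :=
  inf_ratio_right_tail_general μ η hηm hindep hlaw
end
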